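/- arXiv:2104.01847 — 2 statements merged into one kernel-verified Lean document; each statement's English description precedes it below -/
import Mathlib

section
/- The positive fixed point φ⁺(a) of tanh(aφ) = φ is strictly increasing in a on (1, ∞). -/
/-!
Write `x = a φ⁺(a)`. The fixed-point equation says exactly that `tanh x / x = a⁻¹`, and
`tanh x / x` is strictly decreasing on `(0, ∞)` (its derivative has the sign
of `x - sinh x cosh x`), so `x` increases with `a`; hence so does `φ⁺(a) = tanh x`.
-/

open Real Set

namespace Real

theorem tanh_strictMono : StrictMono tanh := fun x y hxy => by
  have mem (z : ℝ) : tanh z ∈ Ioo (-1) 1 := ⟨neg_one_lt_tanh z, tanh_lt_one z⟩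
  rwa [← strictMonoOn_artanh.lt_iff_lt (mem x) (mem y), artanh_tanh, artanh_tanh]

theorem hasDerivAt_tanh (x : ℝ) : HasDerivAt tanh (cosh x ^ 2)⁻¹ x := by
  have hquot := (hasDerivAt_sinh x).div (hasDerivAt_cosh x) (cosh_pos x).ne'
  rw [show tanh = sinh / cosh from funext tanh_eq_sinh_div_cosh]
  refine hquot.congr_deriv ?_
  rw [← sq, ← sq, cosh_sq_sub_sinh_sq, one_div]

theorem continuous_tanh : Continuous tanh :=
  continuous_iff_continuousAt.2 fun x => (hasDerivAt_tanh x).continuousAt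

theorem self_lt_sinh_mul_cosh {x : ℝ} (hx : 0 < x) : x < sinh x * cosh x :=
  calc x < sinh x := self_lt_sinh_iff.2 hx
    _ ≤ sinh x * cosh x := le_mul_of_one_le_right (sinh_pos_iff.2 hx).le (one_le_cosh x)

theorem strictAntiOn_tanh_div_self : StrictAntiOn (fun t => tanh t / t) (Ioi 0) := by
  refine strictAntiOn_of_deriv_neg (convex_Ioi 0)
    (continuous_tanh.continuousOn.div continuousOn_id fun t ht => ht.ne') fun t ht => ?_
  rw [interior_Ioi] at ht
  have ht : 0 < t := ht
  rw [((hasDerivAt_tanh t).fun_div (hasDerivAt_id' t) ht.ne').deriv]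
  have hc := cosh_pos t
  refine div_neg_of_neg_of_pos ?_ (by positivity)
  rw [tanh_eq_sinh_div_cosh, sub_neg, mul_one, ← div_eq_inv_mul,
    div_lt_div_iff₀ (by positivity) hc]
  nlinarith [self_lt_sinh_mul_cosh ht]

end Real

theorem tanh_mul_div_eq_inv_of_tanh_mul_eq {a φ : ℝ} (ha : a ≠ 0) (hφ : φ ≠ 0)
    (h : tanh (a * φ) = φ) : tanh (a * φ) / (a * φ) = a⁻¹ := by
  rw [h]; field_simp

/-- The positive fixed point `φ⁺(a)` of `tanh (a φ) = φ` is strictly increasing in `a` on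
`(1, ∞)`. -/
theorem tanh_pos_fixed_point_strictMono (φp : ℝ → ℝ)
    (h : ∀ a : ℝ, 1 < a → 0 < φp a ∧ Real.tanh (a * φp a) = φp a) :
    StrictMonoOn φp (Set.Ioi 1) := by
  intro a (ha : 1 < a) b (hb : 1 < b) hab
  obtain ⟨hφa, hfa⟩ := h a ha
  obtain ⟨hφb, hfb⟩ := h b hb
  have ha0 : 0 < a := one_pos.trans ha
  have hb0 : 0 < b := one_pos.trans hb
  have harg : a * φp a < b * φp b := by
    rw [← strictAntiOn_tanh_div_self.lt_iff_gt (mul_pos hb0 hφb) (mul_pos ha0 hφa),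
      tanh_mul_div_eq_inv_of_tanh_mul_eq hb0.ne' hφb.ne' hfb,
      tanh_mul_div_eq_inv_of_tanh_mul_eq ha0.ne' hφa.ne' hfa]
    exact inv_strictAnti₀ ha0 hab
  calc φp a = tanh (a * φp a) := hfa.symm
    _ < tanh (b * φp b) := tanh_strictMono harg
    _ = φp b := hfb
end

section
/- For α > 1 with nonzero steady state φ⁺ (tanh(αφ⁺) = φ⁺), if Cβ·(1 − (φ⁺)²) < 1 and α·(1 − (φ⁺)²) < 1 and the discriminant (1 − (φ⁺)²)²(Cβ + α)² − 4Cβ(1 − (φ⁺)²) < 0, then both eigenvalues of the Jacobian at (φ⁺, 0) have modulus √(Cβ(1 − (φ⁺)²)) < 1, so the steady state is locally stable. -/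
/-! If `x` is a root of `X² - T X + D` with `T, D` real, so is `x̄`; when `T² - 4D < 0` the root
cannot be real, hence `x + x̄ = T` and `‖x‖² = x x̄ = D`. For the Jacobian, `T² - 4D` is the
assumed discriminant and `D = Cβ(1 - φ⁺²)`. -/

theorem Complex.normSq_eq_of_quadratic_of_discrim_neg {T D : ℝ} (hdisc : T ^ 2 - 4 * D < 0)
    {x : ℂ} (hx : x ^ 2 - T * x + D = 0) : Complex.normSq x = D := by
  have hconj : (starRingEnd ℂ x) ^ 2 - T * starRingEnd ℂ x + D = 0 := by
    simpa using congrArg (starRingEnd ℂ) hx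
  have hfac : (starRingEnd ℂ x - x) * (starRingEnd ℂ x + x - T) = 0 := by
    linear_combination hconj - hx
  rcases mul_eq_zero.mp hfac with hreal | hsum
  · obtain ⟨r, rfl⟩ := Complex.conj_eq_iff_real.mp (sub_eq_zero.mp hreal)
    have hr : r ^ 2 - T * r + D = 0 := by exact_mod_cast hx
    nlinarith [sq_nonneg (2 * r - T)]
  · have hprod : x * starRingEnd ℂ x = D := by linear_combination x * hsum - hx
    exact_mod_cast (Complex.mul_conj x).symm.trans hprod

theorem Matrix.norm_eq_sqrt_det_of_mem_spectrum_map_ofReal {A : Matrix (Fin 2) (Fin 2) ℝ}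
    (hA : A.discr < 0) {x : ℂ} (hx : x ∈ spectrum ℂ (A.map (Complex.ofReal ·))) :
    ‖x‖ = Real.sqrt A.det := by
  rw [Matrix.discr_fin_two] at hA
  have hroot : x ^ 2 - A.trace * x + A.det = 0 := by
    have := (Matrix.mem_spectrum_iff_isRoot_charpoly.mp hx).eq_zero
    rw [show A.map (Complex.ofReal ·) = A.map Complex.ofRealHom from rfl, Matrix.charpoly_map,
      Matrix.charpoly_fin_two] at this
    simpa using this
  rw [← Complex.normSq_eq_of_quadratic_of_discrim_neg hA hroot, Complex.normSq_eq_norm_sq,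
    Real.sqrt_sq (norm_nonneg x)]

theorem sentiment_return_nonzero_stable_general (α β C φp : ℝ)
    (h1 : C * β * (1 - φp ^ 2) < 1)
    (hdisc : (1 - φp ^ 2) ^ 2 * (C * β + α) ^ 2 - 4 * (C * β) * (1 - φp ^ 2) < 0) :
    (∀ x ∈ spectrum ℂ
        ((!![α * (1 - φp ^ 2), β * (1 - φp ^ 2);
            C * (α * (1 - φp ^ 2) - 1), C * β * (1 - φp ^ 2)]).map (Complex.ofReal ·)),
        ‖x‖ = Real.sqrt (C * β * (1 - φp ^ 2))) ∧
      Real.sqrt (C * β * (1 - φp ^ 2)) < 1 := by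
  set s := 1 - φp ^ 2
  set J : Matrix (Fin 2) (Fin 2) ℝ := !![α * s, β * s; C * (α * s - 1), C * β * s]
  have hdet : J.det = C * β * s := by
    rw [Matrix.det_fin_two_of]; ring
  have hJ : J.discr < 0 := by
    rw [Matrix.discr_fin_two, Matrix.trace_fin_two_of, hdet]; linarith
  refine ⟨fun x hx => hdet ▸ Matrix.norm_eq_sqrt_det_of_mem_spectrum_map_ofReal hJ hx, ?_⟩
  rw [Real.sqrt_lt' one_pos]; linarith

/-- For `α > 1` with nonzero steady state `φ⁺`, if `Cβ(1 − (φ⁺)²) < 1`, `α(1 − (φ⁺)²) < 1`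
and the discriminant `(1 − (φ⁺)²)²(Cβ + α)² − 4Cβ(1 − (φ⁺)²) < 0`, then both eigenvalues of
the Jacobian at `(φ⁺, 0)` have modulus `√(Cβ(1 − (φ⁺)²)) < 1`: the steady state is locally
stable. -/
theorem sentiment_return_nonzero_stable (α β C φp : ℝ) (hα : 1 < α) (hβ : 0 < β)
    (hC : 0 < C) (hφp : 0 < φp) (hfix : Real.tanh (α * φp) = φp)
    (h1 : C * β * (1 - φp ^ 2) < 1) (h2 : α * (1 - φp ^ 2) < 1)
    (hdisc : (1 - φp ^ 2) ^ 2 * (C * β + α) ^ 2 - 4 * (C * β) * (1 - φp ^ 2) < 0) :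
    (∀ x ∈ spectrum ℂ
        ((!![α * (1 - φp ^ 2), β * (1 - φp ^ 2);
            C * (α * (1 - φp ^ 2) - 1), C * β * (1 - φp ^ 2)]).map (Complex.ofReal ·)),
        ‖x‖ = Real.sqrt (C * β * (1 - φp ^ 2))) ∧
      Real.sqrt (C * β * (1 - φp ^ 2)) < 1 :=
  sentiment_return_nonzero_stable_general α β C φp h1 hdisc
end
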